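/- For every s > 0, the set of x ∈ (0,1] for which Σₙ dₙ(x)^{−s} diverges is comeager in (0,1]. -/

import Mathlib

/-- The first Engel digit `d₁(x) = ⌊1/x⌋ + 1`. -/
noncomputable def engelD1 (x : ℝ) : ℕ := ⌊1 / x⌋₊ + 1

/-- The Engel map `T(x) = d₁(x)·x − 1`. -/
noncomputable def engelT (x : ℝ) : ℝ := (engelD1 x : ℝ) * x - 1

/-- The `n`-th Engel digit (0-indexed): `dₙ₊₁(x) = d₁(Tⁿ(x))`. -/
noncomputable def engelDigit (x : ℝ) (n : ℕ) : ℕ := engelD1 (engelT^[n] x)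

/-!
The summable set is covered by the sets `{x | every partial sum is ≤ M}`, `M ∈ ℕ`, so it
suffices that each of them is nowhere dense. A rational `x = p/q` has all Engel digits at most
`q + 1`, because `q · Tⁿ(x)` stays a positive integer; hence its series diverges and some partial
sum exceeds `M`. On the left neighbourhood `(1/d₁(x), x]` of any `x > 0` the first digit is
constant and `T` is increasing and affine, so the first `K` digits, and with them that partial
sum, are constant on an interval just left of each rational. Such intervals exist arbitrarily
close to every point of `(0,1]`.
-/

open Filter Topology Set

section Engel

variable {x y : ℝ}

lemma engelD1_pos (x : ℝ) : 0 < engelD1 x := Nat.succ_pos _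

lemma one_div_lt_engelD1 (x : ℝ) : 1 / x < engelD1 x := by
  simpa [engelD1] using Nat.lt_floor_add_one (1 / x)

lemma engelD1_le (hx : 0 < x) : (engelD1 x : ℝ) ≤ 1 / x + 1 := by
  simpa [engelD1] using Nat.floor_le (one_div_pos.2 hx).le

lemma one_div_engelD1_lt (hx : 0 < x) : 1 / (engelD1 x : ℝ) < x := by
  rw [one_div_lt (Nat.cast_pos.2 (engelD1_pos x)) hx]
  exact one_div_lt_engelD1 x

lemma engelT_pos (hx : 0 < x) : 0 < engelT x := by
  have := one_div_lt_engelD1 x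
  rw [div_lt_iff₀ hx] at this
  simp only [engelT]
  linarith

lemma engelT_iterate_pos (hx : 0 < x) (n : ℕ) : 0 < engelT^[n] x := by
  induction n with
  | zero => exact hx
  | succ n ih => simpa only [Function.iterate_succ_apply'] using engelT_pos ih

lemma engelDigit_succ (x : ℝ) (n : ℕ) : engelDigit x (n + 1) = engelDigit (engelT x) n := by
  simp [engelDigit, Function.iterate_succ_apply]

lemma exists_int_mul_engelT_iterate {q : ℕ} {k : ℤ} (h : q * x = k) (n : ℕ) :
    ∃ k : ℤ, q * engelT^[n] x = k := by
  induction n with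
  | zero => exact ⟨k, h⟩
  | succ n ih =>
    obtain ⟨k, hk⟩ := ih
    refine ⟨engelD1 (engelT^[n] x) * k - q, ?_⟩
    rw [Function.iterate_succ_apply', engelT]
    push_cast
    linear_combination (engelD1 (engelT^[n] x) : ℝ) * hk

lemma engelD1_le_of_mul_eq_int (hx : 0 < x) {q : ℕ} (hq : 0 < q) {k : ℤ} (h : q * x = k) :
    engelD1 x ≤ q + 1 := by
  have hk : (0 : ℤ) < k := by exact_mod_cast h ▸ mul_pos (Nat.cast_pos.2 hq) hx
  have hinv : 1 / x ≤ q := by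
    rw [div_le_iff₀ hx, h]
    exact_mod_cast hk
  exact_mod_cast (engelD1_le hx).trans (add_le_add_left hinv 1)

lemma engelDigit_le_of_mul_eq_int (hx : 0 < x) {q : ℕ} (hq : 0 < q) {k : ℤ} (h : q * x = k)
    (n : ℕ) : engelDigit x n ≤ q + 1 :=
  have ⟨_, hn⟩ := exists_int_mul_engelT_iterate h n
  engelD1_le_of_mul_eq_int (engelT_iterate_pos hx n) hq hn

lemma engelDigit_ratCast_le {q : ℚ} (hq : 0 < q) (n : ℕ) : engelDigit q n ≤ q.den + 1 :=
  engelDigit_le_of_mul_eq_int (Rat.cast_pos.2 hq) q.pos (k := q.num)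
    (by rw [mul_comm]; exact_mod_cast Rat.mul_den_eq_num q) n

lemma engelD1_eq_of_mem_Ioc (hy : y ∈ Ioc (1 / (engelD1 x : ℝ)) x) : engelD1 y = engelD1 x := by
  have hd : (0 : ℝ) < engelD1 x := Nat.cast_pos.2 (engelD1_pos x)
  have hy0 : 0 < y := (one_div_pos.2 hd).trans hy.1
  rw [engelD1, engelD1, Nat.add_right_cancel_iff, Nat.floor_eq_iff (one_div_pos.2 hy0).le]
  constructor
  · exact (Nat.floor_le (one_div_pos.2 (hy0.trans_le hy.2)).le).trans
      (one_div_le_one_div_of_le hy0 hy.2)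
  · have := (one_div_lt hd hy0).1 hy.1
    simpa [engelD1] using this

lemma eventually_engelD1_eq (hx : 0 < x) : ∀ᶠ y in 𝓝[≤] x, engelD1 y = engelD1 x :=
  mem_of_superset (Ioc_mem_nhdsLE (one_div_engelD1_lt hx)) fun _ ↦ engelD1_eq_of_mem_Ioc

lemma tendsto_engelT_nhdsLE (hx : 0 < x) : Tendsto engelT (𝓝[≤] x) (𝓝[≤] (engelT x)) := by
  have hd : (0 : ℝ) ≤ engelD1 x := Nat.cast_nonneg _
  have hcont : Continuous fun y ↦ (engelD1 x : ℝ) * y - 1 := by fun_prop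
  have affine : Tendsto (fun y ↦ (engelD1 x : ℝ) * y - 1) (𝓝[≤] x) (𝓝[≤] (engelT x)) :=
    hcont.continuousWithinAt.tendsto_nhdsWithin fun y (hy : y ≤ x) ↦
      sub_le_sub_right (mul_le_mul_of_nonneg_left hy hd) 1
  refine affine.congr' ?_
  filter_upwards [eventually_engelD1_eq hx] with y hy
  rw [engelT, hy]

lemma eventually_engelDigit_eq (hx : 0 < x) (n : ℕ) :
    ∀ᶠ y in 𝓝[≤] x, engelDigit y n = engelDigit x n := by
  induction n generalizing x with
  | zero => exact eventually_engelD1_eq hx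
  | succ n ih =>
    filter_upwards [(tendsto_engelT_nhdsLE hx).eventually (ih (engelT_pos hx))] with y hy
    rwa [engelDigit_succ, engelDigit_succ]

end Engel

lemma isNowhereDense_preimage_val_Ioc {a b : ℝ} {D B : Set ℝ} (hD : Dense D)
    (h : ∀ q ∈ D, q ∈ Ioo a b → Bᶜ ∈ 𝓝[≤] q) :
    IsNowhereDense (Subtype.val ⁻¹' B : Set (Ioc a b)) := by
  rw [IsNowhereDense, interior_eq_empty_iff_dense_compl, ← interior_compl, dense_iff_inter_open]
  rintro U hU ⟨x, hxU⟩
  obtain ⟨U', hU', hU'U⟩ := (mem_nhds_subtype _ x U).1 (hU.mem_nhds hxU)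
  obtain ⟨c, hcx, hc⟩ := mem_nhdsLE_iff_exists_Ioc_subset.1 (nhdsWithin_le_nhds hU')
  obtain ⟨q, hqD, hq⟩ := hD.exists_between (max_lt hcx x.2.1)
  obtain ⟨l, hlq, hl⟩ := mem_nhdsLE_iff_exists_Ioc_subset.1
    (h q hqD ⟨(le_max_right _ _).trans_lt hq.1, hq.2.trans_le x.2.2⟩)
  set m := max l (max c a)
  have hmq : m < q := max_lt hlq hq.1
  have hgood : ∀ y ∈ Ioo m q, y ∈ Ioc a b ∧ y ∈ U' ∧ y ∉ B := by
    rintro y ⟨hmy, hyq⟩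
    simp only [m, max_lt_iff] at hmy
    refine ⟨⟨hmy.2.2, hyq.le.trans (hq.2.le.trans x.2.2)⟩, hc ⟨hmy.2.1, hyq.le.trans hq.2.le⟩,
      hl ⟨hmy.1, hyq.le⟩⟩
  have hmid : (m + q) / 2 ∈ Ioo m q := ⟨by linarith, by linarith⟩
  refine ⟨⟨(m + q) / 2, (hgood _ hmid).1⟩, hU'U (hgood _ hmid).2.1, ?_⟩
  rw [mem_interior_iff_mem_nhds, mem_nhds_subtype]
  exact ⟨Ioo m q, isOpen_Ioo.mem_nhds hmid, fun z hz ↦ (hgood z hz).2.2⟩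

lemma not_summable_engelDigit_rpow_ratCast {q : ℚ} (hq : 0 < q) {s : ℝ} (hs : 0 ≤ s) :
    ¬ Summable fun n ↦ (engelDigit q n : ℝ) ^ (-s) := by
  intro hsum
  have hpos : (0 : ℝ) < ((q.den + 1 : ℕ) : ℝ) ^ (-s) := by positivity
  have hle (n : ℕ) : ((q.den + 1 : ℕ) : ℝ) ^ (-s) ≤ (engelDigit q n : ℝ) ^ (-s) :=
    Real.rpow_le_rpow_of_nonpos (Nat.cast_pos.2 (engelD1_pos _))
      (by exact_mod_cast engelDigit_ratCast_le hq n) (neg_nonpos.2 hs)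
  linarith [ge_of_tendsto' hsum.tendsto_atTop_zero hle]

lemma eventually_exists_lt_sum_engelDigit_rpow {q : ℚ} (hq : 0 < q) {s : ℝ} (hs : 0 ≤ s)
    (M : ℝ) : ∀ᶠ y in 𝓝[≤] (q : ℝ), ∃ K, M < ∑ n ∈ Finset.range K, (engelDigit y n : ℝ) ^ (-s) := by
  obtain ⟨K, hK⟩ := ((not_summable_iff_tendsto_nat_atTop_of_nonneg fun n ↦ by positivity).1
    (not_summable_engelDigit_rpow_ratCast hq hs)).eventually_gt_atTop M |>.exists
  filter_upwards [(Finset.range K).eventually_all.2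
    fun n _ ↦ eventually_engelDigit_eq (Rat.cast_pos.2 hq) n] with y hy
  exact ⟨K, hK.trans_eq (Finset.sum_congr rfl fun n hn ↦ by rw [hy n hn])⟩

/-- For every `s > 0`, the set of `x ∈ (0,1]` with `Σₙ dₙ(x)^{−s} = ∞` is comeager in
`(0,1]`; equivalently, its complement (the summability set) is meager. -/
theorem divergence_set_power_comeager (s : ℝ) (hs : 0 < s) :
    IsMeagre {x : Set.Ioc (0 : ℝ) 1 |
      Summable fun n : ℕ => ((engelDigit (x : ℝ) n : ℝ)) ^ (-s)} := by
  let bounded (M : ℕ) : Set ℝ :=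
    {y | ∀ K, ∑ n ∈ Finset.range K, (engelDigit y n : ℝ) ^ (-s) ≤ M}
  have cover : {x : Set.Ioc (0 : ℝ) 1 | Summable fun n ↦ (engelDigit x n : ℝ) ^ (-s)} ⊆
      ⋃ M : ℕ, Subtype.val ⁻¹' bounded M := fun x hx ↦
    mem_iUnion.2 ⟨_, fun K ↦ (hx.sum_le_tsum _ fun n _ ↦ by positivity).trans (Nat.le_ceil _)⟩
  refine (isMeagre_iUnion fun M ↦
    (isNowhereDense_preimage_val_Ioc Rat.denseRange_cast ?_).isMeagre).mono cover
  rintro _ ⟨q, rfl⟩ hq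
  filter_upwards [eventually_exists_lt_sum_engelDigit_rpow (Rat.cast_pos.1 hq.1) hs.le M]
    with y ⟨K, hK⟩ hy
  exact (hy K).not_gt hK
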